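/- Let μ ≥ 1, ℓ ≥ 0, m ≥ 0 be integers, set M = 2ℓ + 16m + 9 and σ = −(2ℓ + 12m + 7)·k. Then for every pair (κ, λ) ∈ {(0,1), (1,1)} and every integer k with gcd(k, M) = 1, one has H_M( q^σ · f((−1)^κ q^k, (−1)^κ q^{μM−k})^{2ℓ+1} · f((−1)^λ q^{4k}, (−1)^λ q^{2μM−4k})^{2m+1} ) = 0. -/

import Mathlib

/-!
Common setup: Ramanujan theta series as formal Laurent series over `ℚ`
(`LaurentSeries ℚ = HahnSeries ℤ ℚ`), and the huffing operator `H_M`.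
-/

noncomputable section

open scoped Classical

namespace ThetaVanish

/-- A subset of `ℤ` that is bounded below is partially well-ordered. -/
theorem isPWO_of_subset_Ici {a : ℤ} {s : Set ℤ} (h : s ⊆ Set.Ici a) : s.IsPWO := by
  have hWF : s.IsWF := by
    rw [Set.isWF_iff_no_descending_seq]
    intro f hf hmem
    have key : ∀ n : ℕ, f n + n ≤ f 0 := by
      intro n
      induction n with
      | zero => simp
      | succ k ih =>
        have h2 : f (k + 1) < f k := hf (Nat.lt_succ_self k)
        push_cast
        push_cast at ih
        omega
    have h1 := key (f 0 - a + 1).toNat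
    have h2 : a ≤ f ((f 0 - a + 1).toNat) := h (hmem _)
    have h3 : a ≤ f 0 := h (hmem 0)
    omega
  exact hWF.isPWO

/-- The coefficient of `q^N` in Ramanujan's theta series `f(ε q^r, ε q^s)`:
the (finite, when `r + s > 0`) sum of `ε^n` over all integers `n` with
`r·n(n+1)/2 + s·n(n-1)/2 = N`. -/
def thetaCoeff (ε r s : ℤ) : ℤ → ℚ := fun N =>
  ∑ᶠ n : ℤ, if r * (n * (n + 1) / 2) + s * (n * (n - 1) / 2) = N then (ε : ℚ) ^ n else 0

theorem thetaCoeff_support (ε r s : ℤ) (h : 0 < r + s) :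
    Function.support (thetaCoeff ε r s) ⊆ Set.Ici (-(r - s) ^ 2) := by
  intro N hN
  simp only [Function.mem_support, ne_eq] at hN
  rw [Set.mem_Ici]
  by_contra hcon
  push_neg at hcon
  apply hN
  apply finsum_eq_zero_of_forall_eq_zero
  intro n
  rw [if_neg]
  intro hQ
  obtain ⟨c, hc⟩ := Int.even_mul_succ_self n
  obtain ⟨e, he⟩ := Int.even_mul_pred_self n
  have hc' : n * (n + 1) = 2 * c := by omega
  have he' : n * (n - 1) = 2 * e := by omega
  have e1 : n * (n + 1) / 2 = c := by omega
  have e2 : n * (n - 1) / 2 = e := by omega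
  rw [e1, e2] at hQ
  have key : 2 * N = (r + s) * n ^ 2 + (r - s) * n := by
    linear_combination -2 * hQ - r * hc' - s * he'
  nlinarith [sq_nonneg (2 * n + r - s), sq_nonneg (r - s),
    mul_nonneg (show (0:ℤ) ≤ r + s - 1 by omega) (sq_nonneg n)]

/-- Ramanujan's theta series `f(ε q^r, ε q^s)` (for a sign `ε ∈ {1, -1}` and
`r + s > 0`), as a formal Laurent series over `ℚ`; junk value `0` if `r + s ≤ 0`. -/
def theta (ε r s : ℤ) : LaurentSeries ℚ :=
  if h : 0 < r + s then
    { coeff := thetaCoeff ε r s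
      isPWO_support' := isPWO_of_subset_Ici (thetaCoeff_support ε r s h) }
  else 0

/-- The huffing operator `H_M`: keep only the coefficients whose index is a
multiple of `M`. -/
def huff (M : ℤ) (G : LaurentSeries ℚ) : LaurentSeries ℚ where
  coeff N := if M ∣ N then G.coeff N else 0
  isPWO_support' := by
    apply Set.IsPWO.mono G.isPWO_support
    intro N hN
    simp only [Function.mem_support, ne_eq] at hN
    rw [HahnSeries.mem_support]
    by_cases hd : M ∣ N
    · rwa [if_pos hd] at hN
    · exact absurd (if_neg hd) hN


/-!
Expanding both powers, the coefficient of `q^N` is a signed count of pairs of tuples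
`(u, v) ∈ ℤ^(2ℓ+1) × ℤ^(2m+1)`. Modulo `M` the exponent of the term `(u, v)` is
`σ + k (Σ u + 4 Σ v)`, so for `M ∣ N`, since `k` is prime to `M`, the terms contributing to `q^N`
satisfy `2 (Σ u + 4 Σ v) = M c + (2ℓ + 1) + 4 (2m + 1)` with `c` odd. The reflection
`u_i ↦ c + 1 - u_i`, `v_j ↦ 2c + 1 - v_j` is an involution of this set of terms; because
`M = (2ℓ + 1) + 8 (2m + 1)` it preserves the exponent, and it reverses the sign: each of the odd
number `2m + 1` of factors `(-1)^(v_j)` changes sign, while `(±1)^(u_i)` does not as `c + 1` is even.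
-/

end ThetaVanish

theorem finsum_eq_zero_of_sign_reversing {α R : Type*} [NonAssocRing R] [NoZeroDivisors R]
    [CharZero R] {f : α → R} (ψ : α → α) (h : ∀ x, f x ≠ 0 → ψ (ψ x) = x ∧ f (ψ x) = -f x) :
    ∑ᶠ x, f x = 0 := by
  -- extend `ψ` by the identity off the support, where `f x = -f x` holds trivially
  let ψ' : α → α := fun x => if f x = 0 then x else ψ x
  have hψ' : ∀ x, f (ψ' x) = -f x := fun x => by
    by_cases hx : f x = 0
    · simp [ψ', hx]
    · simp [ψ', hx, (h x hx).2]
  have hinv : Function.Involutive ψ' := fun x => by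
    by_cases hx : f x = 0
    · simp [ψ', hx]
    · have hψx : f (ψ x) ≠ 0 := by rw [(h x hx).2]; exact neg_ne_zero.mpr hx
      simp [ψ', hx, hψx, (h x hx).1]
  refine CharZero.eq_neg_self_iff.mp ?_
  calc ∑ᶠ x, f x = ∑ᶠ x, f (ψ' x) := (finsum_comp_equiv hinv.toPerm).symm
    _ = ∑ᶠ x, -f x := finsum_congr hψ'
    _ = -∑ᶠ x, f x := finsum_neg_distrib f

namespace HahnSeries

theorem SummableFamily.coeff_hsum_of_eq_single {Γ R α : Type*} [PartialOrder Γ] [AddCommMonoid R]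
    [DecidableEq Γ] (F : SummableFamily Γ R α) {a : α → Γ} {c : α → R}
    (hF : ∀ x, F x = HahnSeries.single (a x) (c x)) (g : Γ) :
    F.hsum.coeff g = ∑ᶠ x, if a x = g then c x else 0 := by
  simp only [SummableFamily.coeff_hsum, hF, coeff_single, eq_comm]
  congr!

variable {Γ R α : Type*} [AddCommMonoid Γ] [PartialOrder Γ] [IsOrderedCancelAddMonoid Γ]
  [CommSemiring R]

theorem prod_single {ι : Type*} (s : Finset ι) (a : ι → Γ) (r : ι → R) :
    ∏ i ∈ s, single (a i) (r i) = single (∑ i ∈ s, a i) (∏ i ∈ s, r i) := by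
  induction s using Finset.induction_on with
  | empty => simp
  | insert i s hi ih =>
    rw [Finset.prod_insert hi, ih, single_mul_single, Finset.sum_insert hi, Finset.prod_insert hi]

namespace SummableFamily

def pow (F : SummableFamily Γ R α) : (p : ℕ) → SummableFamily Γ R (Fin p → α)
  | 0 => Equiv (Equiv.ofUnique Unit (Fin 0 → α)) (const Unit 1)
  | p + 1 => Equiv (Fin.consEquiv fun _ => α) (F.mul (F.pow p))

theorem pow_apply (F : SummableFamily Γ R α) : ∀ (p : ℕ) (v : Fin p → α),
    F.pow p v = ∏ i, F (v i)
  | 0, _ => rfl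
  | p + 1, v => by
    rw [Fin.prod_univ_succ]
    exact congrArg (F (v 0) * ·) (pow_apply F p (Fin.tail v))

theorem hsum_pow (F : SummableFamily Γ R α) : ∀ p : ℕ, (F.pow p).hsum = F.hsum ^ p
  | 0 => by simp [pow]
  | p + 1 => by rw [pow, hsum_equiv, hsum_mul, hsum_pow F p, pow_succ']

end SummableFamily

end HahnSeries

namespace ThetaVanish

open HahnSeries

def thetaExp (r s n : ℤ) : ℤ := r * (n * (n + 1) / 2) + s * (n * (n - 1) / 2)

theorem two_mul_thetaExp (r s n : ℤ) :
    2 * thetaExp r s n = (r + s) * n ^ 2 + (r - s) * n := by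
  obtain ⟨a, ha⟩ := Int.even_mul_succ_self n
  obtain ⟨b, hb⟩ := Int.even_mul_pred_self n
  have hsucc : n * (n + 1) / 2 = a := by omega
  have hpred : n * (n - 1) / 2 = b := by omega
  rw [thetaExp, hsucc, hpred]
  linear_combination r * ha.symm + s * hb.symm

theorem thetaExp_sub_right (r P n : ℤ) :
    thetaExp r (P - r) n = P * (n * (n - 1) / 2) + r * n := by
  have hsucc : n * (n + 1) / 2 = n * (n - 1) / 2 + n := by
    rw [show n * (n + 1) = n * (n - 1) + n * 2 by ring, Int.add_mul_ediv_right _ _ two_ne_zero]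
  rw [thetaExp, hsucc]
  ring

theorem two_mul_thetaExp_sub (r s c n : ℤ) :
    2 * thetaExp r s (c - n) =
      2 * thetaExp r s n + ((r + s) * c ^ 2 + (r - s) * c) - 2 * ((r + s) * c + (r - s)) * n := by
  linear_combination two_mul_thetaExp r s (c - n) - two_mul_thetaExp r s n

theorem neg_sq_le_thetaExp {r s : ℤ} (h : 0 < r + s) (n : ℤ) : -(r - s) ^ 2 ≤ thetaExp r s n := by
  nlinarith [two_mul_thetaExp r s n, sq_nonneg (2 * n + r - s), sq_nonneg (r - s),
    mul_nonneg (show (0 : ℤ) ≤ r + s - 1 by omega) (sq_nonneg n)]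

theorem finite_thetaExp_eq {r s : ℤ} (h : 0 < r + s) (g : ℤ) :
    {n : ℤ | thetaExp r s n = g}.Finite := by
  set R := 2 * |g| + (r - s) ^ 2 + 2
  refine (Set.finite_Icc (-R) R).subset fun n (hn : thetaExp r s n = g) => ?_
  have h2 := two_mul_thetaExp r s n
  rw [hn] at h2
  have hrs := mul_nonneg (show (0 : ℤ) ≤ r + s - 1 by omega) (sq_nonneg n)
  constructor
  · nlinarith [le_abs_self g, neg_abs_le g, abs_nonneg g, sq_nonneg (r - s), sq_nonneg (n + 1),
      sq_nonneg (2 * n + r - s), sq_nonneg (n + R)]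
  · nlinarith [le_abs_self g, neg_abs_le g, abs_nonneg g, sq_nonneg (r - s), sq_nonneg (n - 1),
      sq_nonneg (2 * n + r - s), sq_nonneg (n - R)]

def thetaFamily (ε r s : ℤ) (h : 0 < r + s) : SummableFamily ℤ ℚ ℤ where
  toFun n := single (thetaExp r s n) ((ε : ℚ) ^ n)
  isPWO_iUnion_support' := isPWO_of_subset_Ici fun g hg => by
    obtain ⟨n, hn⟩ := Set.mem_iUnion.mp hg
    rw [Set.mem_singleton_iff.mp (support_single_subset hn)]
    exact neg_sq_le_thetaExp h n
  finite_co_support' g := (finite_thetaExp_eq h g).subset fun n hn => by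
    by_contra hne
    exact hn (coeff_single_of_ne (Ne.symm hne))

theorem hsum_thetaFamily (ε r s : ℤ) (h : 0 < r + s) : (thetaFamily ε r s h).hsum = theta ε r s := by
  ext N
  rw [SummableFamily.coeff_hsum_of_eq_single _ fun _ => rfl, theta, dif_pos h]
  rfl

theorem coeff_single_mul_theta_pow_mul_theta_pow (σ ε₁ r₁ s₁ ε₂ r₂ s₂ : ℤ) (h₁ : 0 < r₁ + s₁)
    (h₂ : 0 < r₂ + s₂) (A B : ℕ) (N : ℤ) :
    (single σ (1 : ℚ) * theta ε₁ r₁ s₁ ^ A * theta ε₂ r₂ s₂ ^ B).coeff N =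
      ∑ᶠ x : (Fin A → ℤ) × (Fin B → ℤ),
        if σ + (∑ i, thetaExp r₁ s₁ (x.1 i) + ∑ j, thetaExp r₂ s₂ (x.2 j)) = N then
          (∏ i, (ε₁ : ℚ) ^ x.1 i) * ∏ j, (ε₂ : ℚ) ^ x.2 j
        else 0 := by
  rw [← hsum_thetaFamily ε₁ r₁ s₁ h₁, ← hsum_thetaFamily ε₂ r₂ s₂ h₂, ← SummableFamily.hsum_pow,
    ← SummableFamily.hsum_pow, mul_assoc, ← SummableFamily.hsum_mul, ← SummableFamily.hsum_smul]
  refine SummableFamily.coeff_hsum_of_eq_single _ (fun x => ?_) N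
  simp [SummableFamily.pow_apply, thetaFamily, prod_single, HahnSeries.of_symm_smul_of_eq_mul,
    single_mul_single]

section Reflection

variable {A B : ℕ}

def weightedSum (x : (Fin A → ℤ) × (Fin B → ℤ)) : ℤ := ∑ i, x.1 i + 4 * ∑ j, x.2 j

def reflect (c : ℤ) (x : (Fin A → ℤ) × (Fin B → ℤ)) : (Fin A → ℤ) × (Fin B → ℤ) :=
  (fun i => c + 1 - x.1 i, fun j => 2 * c + 1 - x.2 j)

theorem reflect_reflect (c : ℤ) (x : (Fin A → ℤ) × (Fin B → ℤ)) : reflect c (reflect c x) = x := by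
  simp [reflect]

theorem weightedSum_reflect (c : ℤ) (x : (Fin A → ℤ) × (Fin B → ℤ)) :
    weightedSum (reflect c x) = (A + 8 * B) * c + A + 4 * B - weightedSum x := by
  simp only [weightedSum, reflect, Finset.sum_sub_distrib, Finset.sum_const, Finset.card_univ,
    Fintype.card_fin, nsmul_eq_mul]
  ring

def productExp (P k : ℤ) (x : (Fin A → ℤ) × (Fin B → ℤ)) : ℤ :=
  ∑ i, thetaExp k (P - k) (x.1 i) + ∑ j, thetaExp (4 * k) (2 * P - 4 * k) (x.2 j)

theorem productExp_eq (P k : ℤ) (x : (Fin A → ℤ) × (Fin B → ℤ)) :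
    productExp P k x =
      P * (∑ i, x.1 i * (x.1 i - 1) / 2 + 2 * ∑ j, x.2 j * (x.2 j - 1) / 2) + k * weightedSum x := by
  simp only [productExp, weightedSum, thetaExp_sub_right, Finset.sum_add_distrib,
    ← Finset.mul_sum]
  ring

theorem productExp_reflect (P k c : ℤ) (x : (Fin A → ℤ) × (Fin B → ℤ))
    (hc : 2 * weightedSum x = (A + 8 * B) * c + A + 4 * B) :
    productExp P k (reflect c x) = productExp P k x := by
  have h₁ := fun i => two_mul_thetaExp_sub k (P - k) (c + 1) (x.1 i)
  have h₂ := fun j => two_mul_thetaExp_sub (4 * k) (2 * P - 4 * k) (2 * c + 1) (x.2 j)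
  suffices 2 * productExp P k (reflect c x) = 2 * productExp P k x by linarith
  simp only [productExp, reflect, mul_add, Finset.mul_sum, h₁, h₂]
  simp only [Finset.sum_add_distrib, Finset.sum_sub_distrib, Finset.sum_const, Finset.card_univ,
    Fintype.card_fin, nsmul_eq_mul, ← Finset.mul_sum]
  rw [weightedSum] at hc
  linear_combination (-(P * c + 2 * k)) * hc

def productSign (ε : ℚ) (x : (Fin A → ℤ) × (Fin B → ℤ)) : ℚ :=
  (∏ i, ε ^ x.1 i) * ∏ j, (-1 : ℚ) ^ x.2 j

theorem zpow_sub_of_sq_eq_one {K : Type*} [DivisionRing K] {ε : K} (hε : ε ^ 2 = 1) (a n : ℤ) :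
    ε ^ (a - n) = ε ^ a * ε ^ n := by
  have hε0 : ε ≠ 0 := by rintro rfl; norm_num at hε
  rw [sub_eq_add_neg, zpow_add₀ hε0, show -n = n + 2 * (-n) by ring, zpow_add₀ hε0, zpow_mul]
  norm_cast
  rw [hε, one_zpow, mul_one]

theorem productSign_reflect {ε : ℚ} (hε : ε ^ 2 = 1) (hB : Odd B) {c : ℤ} (hc : Odd c)
    (x : (Fin A → ℤ) × (Fin B → ℤ)) : productSign ε (reflect c x) = -productSign ε x := by
  have hε' : ε ^ (c + 1) = 1 := by
    obtain ⟨d, hd⟩ := hc.add_one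
    rw [hd, ← two_mul, zpow_mul]
    norm_cast
    rw [hε, one_zpow]
  simp only [productSign, reflect, zpow_sub_of_sq_eq_one hε,
    zpow_sub_of_sq_eq_one (by norm_num : (-1 : ℚ) ^ 2 = 1), hε', one_mul,
    Odd.neg_one_zpow (odd_two_mul_add_one c), neg_one_mul, Finset.prod_neg, Finset.card_univ,
    Fintype.card_fin, hB.neg_one_pow]
  ring

end Reflection

theorem dvd_two_mul_weightedSum_sub {A B : ℕ} {P k σ M : ℤ} (hMP : M ∣ P) (hk : IsCoprime M k)
    (hσ : 2 * σ = -k * (M + A + 4 * B)) {x : (Fin A → ℤ) × (Fin B → ℤ)}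
    (hx : M ∣ σ + productExp P k x) : M ∣ 2 * weightedSum x - A - 4 * B := by
  rw [productExp_eq, ← add_assoc, add_comm σ, add_assoc] at hx
  have hσx : M ∣ σ + k * weightedSum x := (dvd_add_right (dvd_mul_of_dvd_left hMP _)).mp hx
  refine hk.dvd_of_dvd_mul_left ?_
  have : k * (2 * weightedSum x - A - 4 * B) = 2 * (σ + k * weightedSum x) + M * k := by
    linear_combination -hσ
  rw [this]
  exact dvd_add (dvd_mul_of_dvd_right hσx 2) (dvd_mul_right M k)

theorem finsum_productSign_eq_zero {A B : ℕ} (hA : Odd A) (hB : Odd B) {P k σ M : ℤ}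
    (hM : M = A + 8 * B) (hMP : M ∣ P) (hk : IsCoprime M k) (hσ : 2 * σ = -k * (M + A + 4 * B))
    {ε : ℚ} (hε : ε ^ 2 = 1) {N : ℤ} (hN : M ∣ N) :
    ∑ᶠ x : (Fin A → ℤ) × (Fin B → ℤ),
      (if σ + productExp P k x = N then productSign ε x else 0) = 0 := by
  let center (x : (Fin A → ℤ) × (Fin B → ℤ)) : ℤ := (2 * weightedSum x - A - 4 * B) / M
  refine finsum_eq_zero_of_sign_reversing (fun x => reflect (center x) x) fun x hx => ?_
  have hfib : σ + productExp P k x = N := by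
    by_contra h
    exact hx (if_neg h)
  have hc : 2 * weightedSum x = M * center x + A + 4 * B := by
    have := Int.mul_ediv_cancel' (dvd_two_mul_weightedSum_sub hMP hk hσ (hfib ▸ hN))
    linarith
  have hc' : 2 * weightedSum x = (A + 8 * B) * center x + A + 4 * B := hM ▸ hc
  have hcenter : center (reflect (center x) x) = center x := by
    simp only [center, weightedSum_reflect]
    congr 1
    linarith
  have hodd : Odd (center x) := by
    have : Odd (M * center x) := by
      rw [show M * center x = 2 * (weightedSum x - 2 * B) - A by linarith]
      exact Even.sub_odd (even_two_mul _) (by exact_mod_cast hA)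
    exact (Int.odd_mul.mp this).2
  refine ⟨by rw [hcenter, reflect_reflect], ?_⟩
  rw [productExp_reflect P k _ x hc', if_pos hfib, if_pos hfib, productSign_reflect hε hB hodd]

theorem coeff_huff (M : ℤ) (G : LaurentSeries ℚ) (N : ℤ) :
    (huff M G).coeff N = if M ∣ N then G.coeff N else 0 :=
  rfl

/-- **Theorem (Type I.3, eq. (1.10))**: with `M = 2ℓ + 16m + 9` and
`σ = -(2ℓ + 12m + 7)k`, for `(κ, λ) ∈ {(0,1), (1,1)}` and `gcd(k, M) = 1`,
`H_M(q^σ · f((-1)^κ q^k, (-1)^κ q^{μM-k})^{2ℓ+1} ·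
  f((-1)^λ q^{4k}, (-1)^λ q^{2μM-4k})^{2m+1}) = 0`. -/
theorem statement6 (μ ℓ m k M σ : ℤ) (hμ : 1 ≤ μ) (hℓ : 0 ≤ ℓ) (hm : 0 ≤ m)
    (hM : M = 2 * ℓ + 16 * m + 9) (hσ : σ = -(2 * ℓ + 12 * m + 7) * k)
    (κ lam : ℕ) (hκlam : (κ = 0 ∧ lam = 1) ∨ (κ = 1 ∧ lam = 1))
    (hk : Int.gcd k M = 1) :
    huff M (HahnSeries.single σ (1 : ℚ)
      * theta ((-1) ^ κ) k (μ * M - k) ^ (2 * ℓ + 1)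
      * theta ((-1) ^ lam) (4 * k) (2 * μ * M - 4 * k) ^ (2 * m + 1)) = 0 := by
  obtain ⟨A, hA⟩ : ∃ A : ℕ, (A : ℤ) = 2 * ℓ + 1 := ⟨(2 * ℓ + 1).toNat, by omega⟩
  obtain ⟨B, hB⟩ : ∃ B : ℕ, (B : ℤ) = 2 * m + 1 := ⟨(2 * m + 1).toNat, by omega⟩
  obtain rfl : lam = 1 := by omega
  have hμM : 0 < μ * M := by nlinarith
  ext N
  rw [coeff_huff, HahnSeries.coeff_zero]
  split_ifs with hN
  · rw [← hA, ← hB, zpow_natCast, zpow_natCast, show 2 * μ * M = 2 * (μ * M) by ring, pow_one,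
      coeff_single_mul_theta_pow_mul_theta_pow _ _ _ _ _ _ _ (by omega) (by omega), Int.cast_neg,
      Int.cast_one]
    have hε : (((-1) ^ κ : ℤ) : ℚ) ^ 2 = 1 := by
      rw [← Int.cast_pow, ← pow_mul, mul_comm, pow_mul, neg_one_sq, one_pow, Int.cast_one]
    exact finsum_productSign_eq_zero ⟨ℓ.toNat, by omega⟩ ⟨m.toNat, by omega⟩
      (by omega) (dvd_mul_left M μ) (Int.isCoprime_iff_gcd_eq_one.mpr (by rwa [Int.gcd_comm]))
      (by rw [hσ, hM, hA, hB]; ring) hε hN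
  · rfl

end ThetaVanish
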